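/- arXiv:2310.06192 — 4 statements merged into one kernel-verified Lean document; each statement's English description precedes it below -/
import Mathlib

section
/- For all integers k ≥ 2 and m ≥ 3k − 1, the Kneser graph K(m,k) is stackable. -/
/-- A cup-stacking move in graph `G`: all cups from `u` are moved to `v`, where
`u ≠ v`, both have at least one cup, and `dist G u v = C u`. -/
def CupMove {V : Type*} [DecidableEq V] (G : SimpleGraph V) (C C' : V → ℕ) : Prop :=
  ∃ u v : V, u ≠ v ∧ 1 ≤ C u ∧ 1 ≤ C v ∧ G.dist u v = C u ∧
    ∀ w, C' w = if w = u then 0 else if w = v then C u + C v else C w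

/-- `G` is `(C, r)`-stackable: some finite sequence of cup-stacking moves starting
from `C` reaches the configuration with all `|C|` cups on `r` and none elsewhere. -/
def IsStackableConf {V : Type*} [Fintype V] [DecidableEq V]
    (G : SimpleGraph V) (C : V → ℕ) (r : V) : Prop :=
  Relation.ReflTransGen (CupMove G) C (fun w => if w = r then ∑ v, C v else 0)

/-- `G` is `r`-stackable: `(𝟏, r)`-stackable where `𝟏` has one cup on each vertex. -/
def IsStackableAt {V : Type*} [Fintype V] [DecidableEq V]
    (G : SimpleGraph V) (r : V) : Prop :=
  IsStackableConf G (fun _ => 1) r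

/-- `G` is stackable: `r`-stackable for every vertex `r`. -/
def IsStackable {V : Type*} [Fintype V] [DecidableEq V] (G : SimpleGraph V) : Prop :=
  ∀ r : V, IsStackableAt G r

/-- The Kneser graph K(m,k): vertices are the k-element subsets of {1,…,m},
adjacent iff disjoint. -/
def kneserGraph (m k : ℕ) : SimpleGraph {A : Finset (Fin m) // A.card = k} :=
  SimpleGraph.fromRel (fun A B => Disjoint A.1 B.1)

/-! For `m ≥ 3k - 1` two intersecting `k`-sets miss at least `k` points of `{1, …, m}`, so
`K(m,k)` has diameter at most 2; it is also vertex-transitive. In a graph of diameter at most 2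
a single cup moves onto any neighbour and a stack of two onto any vertex at distance 2, so `G` is
`r`-stackable once `G - r` has a matching covering every non-neighbour of `r`: each matched pair
is merged on the end not adjacent to `r` and shipped to `r`, the other vertices move to `r` one
by one. By Gallai's exchange argument a maximum matching of a vertex-transitive graph of diameter
at most 2 misses at most one vertex, which transitivity moves to `r`; if the matching is perfect,
the partner of `r` is released instead. -/

open Finset SimpleGraph

namespace Function

variable {V : Type*} (f g : V → V) (a : V)

def alternate (n : ℕ) : V → V := if n % 2 = 0 then f else g

def alternatingSeq : ℕ → V
  | 0 => a
  | n + 1 => alternate f g n (alternatingSeq n)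

variable {f g a}

lemma alternate_add_two (n : ℕ) : alternate f g (n + 2) = alternate f g n := by
  simp [alternate, Nat.add_mod_right]

lemma alternate_congr {i j : ℕ} (h : i % 2 = j % 2) : alternate f g i = alternate f g j := by
  simp only [alternate, h]

lemma eq_alternate_or_eq_alternate_succ {φ : V → V} (hφ : φ = f ∨ φ = g) (n : ℕ) :
    φ = alternate f g n ∨ φ = alternate f g (n + 1) := by
  unfold alternate
  rcases Nat.mod_two_eq_zero_or_one n with h | h <;>
    simp [h, Nat.succ_mod_two_eq_zero_iff, hφ, or_comm]

lemma alternate_alternatingSeq_succ (hf : f.Involutive) (hg : g.Involutive) (n : ℕ) :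
    alternate f g n (alternatingSeq f g a (n + 1)) = alternatingSeq f g a n := by
  change alternate f g n (alternate f g n _) = _
  unfold alternate; split_ifs
  exacts [hf _, hg _]

/-- Read with truncated subtraction: at `n = 0` the right-hand side is `a` itself. -/
lemma alternate_succ_alternatingSeq (hf : f.Involutive) (hg : g.Involutive) (ha : g a = a)
    (n : ℕ) : alternate f g (n + 1) (alternatingSeq f g a n) = alternatingSeq f g a (n - 1) := by
  cases n with
  | zero => simpa [alternate, alternatingSeq] using ha
  | succ n => rw [alternate_add_two, alternate_alternatingSeq_succ hf hg]; rfl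

lemma exists_alternatingSeq_succ_eq [Finite V] (hf : f.Involutive) (hg : g.Involutive)
    (ha : g a = a) :
    ∃ n, alternatingSeq f g a (n + 1) = alternatingSeq f g a n := by
  set s := alternatingSeq f g a
  suffices ∀ j i, i < j → s i = s j → ∃ n, s (n + 1) = s n by
    obtain ⟨i, j, hij, heq⟩ := Finite.exists_ne_map_eq_of_infinite s
    rcases hij.lt_or_gt with h | h
    exacts [this j i h heq, this i j h heq.symm]
  intro j
  induction j using Nat.strong_induction_on with
  | _ j ih =>
  intro i hij heq
  obtain ⟨j, rfl⟩ : ∃ j', j = j' + 1 := ⟨j - 1, by omega⟩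
  have back : alternate f g j (s i) = s j := by
    rw [heq]; exact alternate_alternatingSeq_succ hf hg j
  by_cases hij' : i = j
  · exact ⟨i, by rw [← hij'] at heq; exact heq.symm⟩
  -- step both ends of the collision towards each other
  by_cases hpar : i % 2 = j % 2
  · refine ih j (by omega) (i + 1) (by omega) ?_
    rw [← back, alternate_congr hpar.symm]; rfl
  · refine ih j (by omega) (i - 1) (by omega) ?_
    calc s (i - 1) = alternate f g (i + 1) (s i) := (alternate_succ_alternatingSeq hf hg ha i).symm
      _ = s j := by rw [alternate_congr (by omega : (i + 1) % 2 = j % 2), back]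

/-- `O` is the path traced from the end `a` by applying `f` and `g` alternately: only its two
ends can be fixed by `f` or `g`. -/
lemma exists_invariant_finset_of_apply_eq_self [Finite V] (hf : f.Involutive) (hg : g.Involutive)
    (ha : g a = a) :
    ∃ O : Finset V, a ∈ O ∧ (∀ x ∈ O, f x ∈ O ∧ g x ∈ O) ∧
      ∃ b, ∀ x ∈ O, f x = x ∨ g x = x → x = a ∨ x = b := by
  classical
  set s := alternatingSeq f g a
  have hex := exists_alternatingSeq_succ_eq hf hg ha
  set N := Nat.find hex
  have hN : s (N + 1) = s N := Nat.find_spec hex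
  have hmin : ∀ j, s (j + 1) = s j → N ≤ j := fun j hj => Nat.find_min' hex hj
  have hsucc : ∀ j, alternate f g j (s j) = s (j + 1) := fun j => rfl
  have hpred : ∀ j, alternate f g (j + 1) (s j) = s (j - 1) :=
    alternate_succ_alternatingSeq hf hg ha
  refine ⟨(range (N + 1)).image s, mem_image.mpr ⟨0, by simp, rfl⟩, ?_, s N, ?_⟩
  · have key : ∀ φ, φ = f ∨ φ = g →
        ∀ j ≤ N, φ (s j) ∈ (range (N + 1)).image s := by
      intro φ hφ j hj
      rcases eq_alternate_or_eq_alternate_succ hφ j with rfl | rfl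
      · rw [hsucc]
        rcases hj.lt_or_eq with hj | rfl
        · exact mem_image_of_mem s (mem_range.mpr (by omega))
        · rw [hN]; exact mem_image_of_mem s (mem_range.mpr (by omega))
      · rw [hpred]; exact mem_image_of_mem s (mem_range.mpr (by omega))
    simp only [mem_image, mem_range, forall_exists_index, and_imp]
    rintro _ j hj rfl
    exact ⟨by simpa using key f (.inl rfl) j (by omega),
      by simpa using key g (.inr rfl) j (by omega)⟩
  · simp only [mem_image, mem_range, forall_exists_index, and_imp]
    rintro _ j hj rfl hfix
    obtain ⟨φ, hφ, hφj⟩ : ∃ φ, (φ = f ∨ φ = g) ∧ φ (s j) = s j := by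
      rcases hfix with h | h
      exacts [⟨f, .inl rfl, h⟩, ⟨g, .inr rfl, h⟩]
    rcases eq_alternate_or_eq_alternate_succ hφ j with rfl | rfl
    · exact .inr (by rw [show j = N by have := hmin j (hsucc j ▸ hφj); omega])
    · rw [hpred] at hφj
      rcases Nat.eq_zero_or_pos j with rfl | hj0
      · exact .inl rfl
      · have := hmin (j - 1) (by rw [Nat.sub_add_cancel hj0]; exact hφj.symm)
        omega

end Function

namespace SimpleGraph

variable {V : Type*} {G : SimpleGraph V} {f g : V → V} {u v : V}

/-- A matching of `G` encoded as an involution: `f v` is the partner of `v`, and the fixed points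
of `f` are the unmatched vertices. -/
structure IsMatchingInvolution (G : SimpleGraph V) (f : V → V) : Prop where
  involutive : Function.Involutive f
  adj : ∀ v, f v ≠ v → G.Adj v (f v)

lemma IsMatchingInvolution.conj (hf : G.IsMatchingInvolution f) (φ : G ≃g G) :
    G.IsMatchingInvolution (φ ∘ f ∘ φ.symm) := by
  refine ⟨fun x => by simp [hf.involutive _], fun x hx => ?_⟩
  have hne : f (φ.symm x) ≠ φ.symm x := fun h => hx (by simp [h])
  simpa using φ.map_adj_iff.mpr (hf.adj _ hne)

lemma commonNeighbors_nonempty_of_ediam_le_two (h : G.ediam ≤ 2) (huv : u ≠ v)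
    (hadj : ¬ G.Adj u v) : (G.commonNeighbors u v).Nonempty := by
  have : ¬ 2 < G.edist u v := not_lt.mpr (edist_le_ediam.trans h)
  rw [two_lt_edist_iff] at this
  exact Set.nonempty_iff_ne_empty.mpr fun h => this ⟨huv, hadj, h⟩

lemma dist_eq_two_of_ediam_le_two (h : G.ediam ≤ 2) (huv : u ≠ v) (hadj : ¬ G.Adj u v) :
    G.dist u v = 2 := by
  have := commonNeighbors_nonempty_of_ediam_le_two h huv hadj
  rw [dist, edist_eq_two_iff.mpr ⟨huv, hadj, this⟩]
  rfl

variable [DecidableEq V]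

lemma IsMatchingInvolution.piecewise (hf : G.IsMatchingInvolution f)
    (hg : G.IsMatchingInvolution g) {O : Finset V} (hO : ∀ x ∈ O, f x ∈ O ∧ g x ∈ O) :
    G.IsMatchingInvolution (O.piecewise g f) := by
  refine ⟨fun x => ?_, fun x hx => ?_⟩
  · by_cases hx : x ∈ O
    · rw [piecewise_eq_of_mem _ _ _ hx, piecewise_eq_of_mem _ _ _ (hO x hx).2, hg.involutive]
    · have hfx : f x ∉ O := fun h => hx (hf.involutive x ▸ (hO _ h).1)
      rw [piecewise_eq_of_notMem _ _ _ hx, piecewise_eq_of_notMem _ _ _ hfx, hf.involutive]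
  · by_cases hxO : x ∈ O
    · rw [piecewise_eq_of_mem _ _ _ hxO] at hx ⊢; exact hg.adj x hx
    · rw [piecewise_eq_of_notMem _ _ _ hxO] at hx ⊢; exact hf.adj x hx

lemma IsMatchingInvolution.exists_unmatch (hf : G.IsMatchingInvolution f) (r : V) :
    ∃ f', G.IsMatchingInvolution f' ∧ f' r = r ∧
      ∀ x, f' x = x → x = r ∨ x = f r ∨ f x = x := by
  have hf' := hf.involutive
  refine ⟨fun x => if x = r ∨ x = f r then x else f x, ⟨fun x => ?_, fun x hx => ?_⟩,
    by simp, fun x hx => ?_⟩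
  · by_cases hx : x = r ∨ x = f r
    · simp [hx]
    · have : ¬ (f x = r ∨ f x = f r) := fun h =>
        hx (h.symm.imp (fun h => hf'.injective h) (fun h => by rw [← h, hf']))
      simp [hx, this, hf' x]
  · by_cases hxr : x = r ∨ x = f r
    · simp [hxr] at hx
    · simp only [hxr, if_false] at hx ⊢; exact hf.adj x hx
  · by_cases hxr : x = r ∨ x = f r
    · tauto
    · simp only [hxr, if_false] at hx; tauto

variable [Fintype V]

def unmatched (f : V → V) : Finset V := {v | f v = v}

@[simp] lemma mem_unmatched : v ∈ unmatched f ↔ f v = v := by simp [unmatched]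

structure IsMaximumMatchingInvolution (G : SimpleGraph V) (f : V → V) : Prop
    extends G.IsMatchingInvolution f where
  card_unmatched_le : ∀ g, G.IsMatchingInvolution g → #(unmatched f) ≤ #(unmatched g)

lemma exists_isMaximumMatchingInvolution (G : SimpleGraph V) :
    ∃ f, G.IsMaximumMatchingInvolution f := by
  classical
  have hne : ({f | G.IsMatchingInvolution f} : Finset (V → V)).Nonempty :=
    ⟨id, by simpa using ⟨fun _ => rfl, fun v h => (h rfl).elim⟩⟩
  obtain ⟨f, hf, hmin⟩ := exists_min_image _ (fun f => #(unmatched f)) hne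
  exact ⟨f, by simpa using hf, fun g hg => hmin g (by simpa using hg)⟩

lemma IsMatchingInvolution.augment (hf : G.IsMatchingInvolution f) (huv : G.Adj u v)
    (hu : f u = u) (hv : f v = v) :
    ∃ f', G.IsMatchingInvolution f' ∧ #(unmatched f') + 2 = #(unmatched f) := by
  have hne := huv.ne
  refine ⟨fun x => if x = u then v else if x = v then u else f x,
    ⟨fun x => ?_, fun x hx => ?_⟩, ?_⟩
  · by_cases hxu : x = u
    · simp [hxu, hne.symm]
    by_cases hxv : x = v
    · simp [hxv]
    have h1 : f x ≠ u := fun h => hxu (by rw [← hf.involutive x, h, hu])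
    have h2 : f x ≠ v := fun h => hxv (by rw [← hf.involutive x, h, hv])
    simp [hxu, hxv, h1, h2, hf.involutive x]
  · by_cases hxu : x = u
    · simpa [hxu] using huv
    by_cases hxv : x = v
    · simpa [hxv, hne.symm] using huv.symm
    simp only [hxu, hxv, if_false] at hx ⊢
    exact hf.adj x hx
  · have : unmatched (fun x => if x = u then v else if x = v then u else f x)
        = ((unmatched f).erase u).erase v := by
      ext x
      by_cases hxu : x = u
      · subst hxu; simp [hne, hne.symm]
      by_cases hxv : x = v
      · subst hxv; simp [hne, hne.symm]
      simp [hxu, hxv]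
    rw [this, card_erase_of_mem (by simp [hv, hne.symm]), card_erase_of_mem (by simp [hu])]
    have : 2 ≤ #(unmatched f) := one_lt_card.mpr ⟨u, by simp [hu], v, by simp [hv], hne⟩
    omega

lemma IsMaximumMatchingInvolution.not_adj (hf : G.IsMaximumMatchingInvolution f)
    (hu : f u = u) (hv : f v = v) : ¬ G.Adj u v := fun huv => by
  obtain ⟨f', hf', hcard⟩ := hf.augment huv hu hv
  have := hf.card_unmatched_le f' hf'
  omega

lemma card_unmatched_piecewise_add (O : Finset V) (f g : V → V) :
    #(unmatched (O.piecewise g f)) + #(unmatched (O.piecewise f g))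
      = #(unmatched f) + #(unmatched g) := by
  simp only [unmatched, card_filter, ← sum_add_distrib]
  refine sum_congr rfl fun x _ => ?_
  by_cases hx : x ∈ O <;> simp [hx, add_comm]

lemma IsMaximumMatchingInvolution.piecewise (hf : G.IsMaximumMatchingInvolution f)
    (hg : G.IsMaximumMatchingInvolution g) {O : Finset V}
    (hO : ∀ x ∈ O, f x ∈ O ∧ g x ∈ O) :
    G.IsMaximumMatchingInvolution (O.piecewise g f) := by
  refine ⟨hf.toIsMatchingInvolution.piecewise hg.toIsMatchingInvolution hO, fun h hh => ?_⟩
  have := card_unmatched_piecewise_add O f g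
  have := hf.card_unmatched_le _ <|
    hg.toIsMatchingInvolution.piecewise hf.toIsMatchingInvolution fun x hx => (hO x hx).symm
  have := hf.card_unmatched_le _ hg.toIsMatchingInvolution
  have := hg.card_unmatched_le _ hf.toIsMatchingInvolution
  have := hf.card_unmatched_le _ hh
  omega

lemma card_unmatched_conj (f : V → V) (φ : G ≃g G) :
    #(unmatched (φ ∘ f ∘ φ.symm)) = #(unmatched f) := by
  refine (card_equiv φ.toEquiv fun x => ?_).symm
  simp

lemma IsMaximumMatchingInvolution.conj (hf : G.IsMaximumMatchingInvolution f) (φ : G ≃g G) :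
    G.IsMaximumMatchingInvolution (φ ∘ f ∘ φ.symm) :=
  ⟨hf.toIsMatchingInvolution.conj φ,
    fun g hg => card_unmatched_conj f φ ▸ hf.card_unmatched_le g hg⟩

/-- Gallai's argument: if `u ≠ v` are unmatched with a common neighbour `w`, transport the
matching so that `w` becomes unmatched and exchange the two matchings along the path starting
at `w`; this keeps the matching maximum and frees `w` together with `u` or `v`. -/
lemma IsMaximumMatchingInvolution.card_unmatched_le_one (hdiam : G.ediam ≤ 2)
    (htrans : ∀ x y : V, ∃ φ : G ≃g G, φ x = y) (hf : G.IsMaximumMatchingInvolution f) :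
    #(unmatched f) ≤ 1 := by
  by_contra! h
  obtain ⟨u, hu, v, hv, huv⟩ := one_lt_card.mp h
  rw [mem_unmatched] at hu hv
  obtain ⟨w, huw, hvw⟩ := commonNeighbors_nonempty_of_ediam_le_two hdiam huv (hf.not_adj hu hv)
  obtain ⟨φ, rfl⟩ := htrans u w
  have hg := hf.conj φ
  have hgw : (φ ∘ f ∘ φ.symm) (φ u) = φ u := by simp [hu]
  obtain ⟨O, hwO, hO, b, hends⟩ :=
    Function.exists_invariant_finset_of_apply_eq_self hf.involutive hg.involutive hgw
  have hmem : ∀ x, f x = x → G.Adj x (φ u) → x ∈ O := fun x hx hxw => by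
    by_contra hxO
    refine (hf.piecewise hg hO).not_adj ?_ ?_ hxw
    · rwa [piecewise_eq_of_notMem _ _ _ hxO]
    · rw [piecewise_eq_of_mem _ _ _ hwO, hgw]
  rcases hends u (hmem u hu huw) (.inl hu) with h | rfl
  · exact huw.ne h
  rcases hends v (hmem v hv hvw) (.inl hv) with h | rfl
  · exact hvw.ne h
  exact huv rfl

lemma exists_isMaximumMatchingInvolution_unmatched_subset (hdiam : G.ediam ≤ 2)
    (htrans : ∀ x y : V, ∃ φ : G ≃g G, φ x = y) (r : V) :
    ∃ f, G.IsMaximumMatchingInvolution f ∧ ∀ x, f x = x → x = r := by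
  obtain ⟨f, hf⟩ := exists_isMaximumMatchingInvolution G
  by_cases hfix : ∃ x, f x = x
  · obtain ⟨x, hx⟩ := hfix
    obtain ⟨φ, rfl⟩ := htrans x r
    have hg := hf.conj φ
    refine ⟨_, hg, fun y hy => card_le_one.mp (hg.card_unmatched_le_one hdiam htrans) _
      (mem_unmatched.mpr hy) _ (by simp [hx])⟩
  · exact ⟨f, hf, fun x hx => (hfix ⟨x, hx⟩).elim⟩

lemma exists_isMatchingInvolution_unmatched_adj (hdiam : G.ediam ≤ 2)
    (htrans : ∀ x y : V, ∃ φ : G ≃g G, φ x = y) (r : V) :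
    ∃ f, G.IsMatchingInvolution f ∧ f r = r ∧ ∀ x, f x = x → x ≠ r → G.Adj x r := by
  obtain ⟨f, hf, hsub⟩ := exists_isMaximumMatchingInvolution_unmatched_subset hdiam htrans r
  obtain ⟨f', hf', hf'r, hfix⟩ := hf.toIsMatchingInvolution.exists_unmatch r
  refine ⟨f', hf', hf'r, fun x hx hxr => ?_⟩
  rcases hfix x hx with rfl | rfl | h
  · exact (hxr rfl).elim
  · exact (hf.toIsMatchingInvolution.adj r hxr).symm
  · exact (hxr (hsub x h)).elim

end SimpleGraph

section Stacking

variable {V : Type*} [Fintype V] [DecidableEq V] {G : SimpleGraph V} {r x y : V} {T : Finset V}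

/-- The vertices of `T` still hold their own cup and `r` holds all cups of the other vertices. -/
def stackConf (r : V) (T : Finset V) (x : V) : ℕ :=
  if x ∈ T then 1 else if x = r then Fintype.card V - #T else 0

lemma cupMove_stackConf_erase (hrT : r ∉ T) (hx : x ∈ T) (hxr : G.Adj x r) :
    CupMove G (stackConf r T) (stackConf r (T.erase x)) := by
  have hT := card_lt_univ_of_notMem hrT
  have hx1 := card_erase_add_one hx
  refine ⟨x, r, hxr.ne, by simp [stackConf, hx], by simp [stackConf, hrT]; omega,
    by simpa [stackConf, hx] using hxr, fun w => ?_⟩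
  by_cases hwx : w = x
  · simp [hwx, stackConf, hxr.ne]
  by_cases hwr : w = r
  · simp [hwr, stackConf, hrT, hx, hxr.ne.symm]; omega
  · simp [stackConf, hwx, hwr]

lemma reflTransGen_stackConf_erase_erase (hrT : r ∉ T) (hx : x ∈ T) (hy : y ∈ T)
    (hxy : G.Adj x y) (hyr : G.dist y r = 2) :
    Relation.ReflTransGen (CupMove G) (stackConf r T) (stackConf r ((T.erase x).erase y)) := by
  have hT := card_lt_univ_of_notMem hrT
  have hx1 := card_erase_add_one hx
  have hy1 := card_erase_add_one (mem_erase.mpr ⟨hxy.ne.symm, hy⟩)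
  have hxr : x ≠ r := fun h => hrT (h ▸ hx)
  have hyr' : y ≠ r := fun h => hrT (h ▸ hy)
  refine .head (⟨x, y, hxy.ne, by simp [stackConf, hx], by simp [stackConf, hy],
    by simpa [stackConf, hx] using hxy, fun w => rfl⟩) (.single ⟨y, r, hyr', ?_, ?_, ?_, ?_⟩)
  · simp [hxy.ne.symm, stackConf, hx]
  · simp [hxr.symm, hyr'.symm, stackConf, hrT]; omega
  · simp [hxy.ne.symm, stackConf, hx, hy, hyr]
  · intro w
    by_cases hwy : w = y
    · simp [hwy, stackConf, hyr']
    by_cases hwx : w = x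
    · simp [hwx, stackConf, hxy.ne, hxr]
    by_cases hwr : w = r
    · simp [hwr, stackConf, hrT, hx, hy, hxr.symm, hyr'.symm, hxy.ne.symm]; omega
    · simp [stackConf, hwy, hwx, hwr]

lemma reflTransGen_stackConf_erase_erase_of_adj (hdiam : G.ediam ≤ 2) (hrT : r ∉ T)
    (hx : x ∈ T) (hy : y ∈ T) (hxy : G.Adj x y) :
    Relation.ReflTransGen (CupMove G) (stackConf r T) (stackConf r ((T.erase x).erase y)) := by
  have hxr : x ≠ r := fun h => hrT (h ▸ hx)
  have hyr : y ≠ r := fun h => hrT (h ▸ hy)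
  by_cases hyr' : G.Adj y r
  · by_cases hxr' : G.Adj x r
    · exact .head (cupMove_stackConf_erase hrT hx hxr')
        (.single (cupMove_stackConf_erase (fun h => hrT (mem_of_mem_erase h))
          (mem_erase.mpr ⟨hxy.ne.symm, hy⟩) hyr'))
    · rw [erase_right_comm]
      exact reflTransGen_stackConf_erase_erase hrT hy hx hxy.symm
        (dist_eq_two_of_ediam_le_two hdiam hxr hxr')
  · exact reflTransGen_stackConf_erase_erase hrT hx hy hxy
      (dist_eq_two_of_ediam_le_two hdiam hyr hyr')

lemma reflTransGen_stackConf_empty (hdiam : G.ediam ≤ 2) {f : V → V}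
    (hf : G.IsMatchingInvolution f) (hfix : ∀ x, f x = x → x ≠ r → G.Adj x r)
    (T : Finset V) (hrT : r ∉ T) (hfT : ∀ x ∈ T, f x ∈ T) :
    Relation.ReflTransGen (CupMove G) (stackConf r T) (stackConf r ∅) := by
  induction T using Finset.strongInduction with
  | H T ih =>
  rcases T.eq_empty_or_nonempty with rfl | ⟨x, hx⟩
  · exact .refl
  have hxr : x ≠ r := fun h => hrT (h ▸ hx)
  have hf' := hf.involutive
  by_cases hfx : f x = x
  · refine .head (cupMove_stackConf_erase hrT hx (hfix x hfx hxr))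
      (ih _ (erase_ssubset hx) (fun h => hrT (mem_of_mem_erase h)) fun z hz => ?_)
    obtain ⟨hzx, hzT⟩ := mem_erase.mp hz
    exact mem_erase.mpr ⟨fun h => hzx (by rw [← hf' z, h, hfx]), hfT z hzT⟩
  · refine (reflTransGen_stackConf_erase_erase_of_adj hdiam hrT hx (hfT x hx) (hf.adj x hfx)).trans
      (ih _ ((erase_ssubset hx).trans_le' (erase_subset _ _))
        (fun h => hrT (mem_of_mem_erase (mem_of_mem_erase h))) fun z hz => ?_)
    obtain ⟨hzfx, hzx, hzT⟩ : z ≠ f x ∧ z ≠ x ∧ z ∈ T := by simpa using hz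
    simp only [mem_erase]
    exact ⟨fun h => hzx (hf'.injective h), fun h => hzfx (by rw [← h, hf']), hfT z hzT⟩

theorem isStackableAt_of_isMatchingInvolution (hdiam : G.ediam ≤ 2) {f : V → V}
    (hf : G.IsMatchingInvolution f) (hfr : f r = r)
    (hfix : ∀ x, f x = x → x ≠ r → G.Adj x r) : IsStackableAt G r := by
  have hstart : stackConf r (univ.erase r) = fun _ => 1 := by
    ext x
    by_cases hx : x = r
    · have := Fintype.card_pos_iff.mpr ⟨r⟩
      simp [stackConf, hx, card_erase_of_mem]
      omega
    · simp [stackConf, hx]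
  have hend : stackConf r ∅ = fun x => if x = r then ∑ _v : V, 1 else 0 := by
    ext x; simp [stackConf]
  have := reflTransGen_stackConf_empty hdiam hf hfix _ (notMem_erase r univ) fun x hx => ?_
  · rwa [hstart, hend] at this
  refine mem_erase.mpr ⟨fun h => (mem_erase.mp hx).1 ?_, mem_univ _⟩
  rw [← hf.involutive x, h, hfr]

theorem isStackable_of_ediam_le_two (hdiam : G.ediam ≤ 2)
    (htrans : ∀ x y : V, ∃ φ : G ≃g G, φ x = y) : IsStackable G := fun r => by
  obtain ⟨f, hf, hfr, hfix⟩ := exists_isMatchingInvolution_unmatched_adj hdiam htrans r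
  exact isStackableAt_of_isMatchingInvolution hdiam hf hfr hfix

end Stacking

section Kneser

variable {m k : ℕ} {A B : {A : Finset (Fin m) // A.card = k}}

lemma kneserGraph_adj_iff : (kneserGraph m k).Adj A B ↔ A ≠ B ∧ Disjoint A.1 B.1 := by
  simp [kneserGraph, disjoint_comm]

lemma kneserGraph_adj_of_disjoint (hA : A.1.Nonempty) (h : Disjoint A.1 B.1) :
    (kneserGraph m k).Adj A B :=
  kneserGraph_adj_iff.mpr
    ⟨fun hAB => hA.ne_empty ((disjoint_self_iff_empty _).mp (hAB ▸ h)), h⟩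

lemma kneserGraph_ediam_le_two (hm : 3 * k - 1 ≤ m) : (kneserGraph m k).ediam ≤ 2 := by
  refine ediam_le_of_edist_le fun A B => ?_
  by_cases hAB : A = B
  · simp [hAB]
  by_cases hadj : (kneserGraph m k).Adj A B
  · simp [edist_eq_one_iff_adj.mpr hadj]
  refine (edist_eq_two_iff.mpr ⟨hAB, hadj, ?_⟩).le
  obtain ⟨a, ha⟩ : (A.1 ∩ B.1).Nonempty :=
    not_disjoint_iff_nonempty_inter.mp fun h => hadj (kneserGraph_adj_iff.mpr ⟨hAB, h⟩)
  -- `m ≥ 3k - 1` leaves room for a `k`-set outside `A ∪ B`, which has at most `2k - 1` elements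
  have hcard : k ≤ #(A.1 ∪ B.1)ᶜ := by
    have := card_union_add_card_inter A.1 B.1
    have := card_pos.mpr ⟨a, ha⟩
    rw [card_compl, Fintype.card_fin]
    omega
  obtain ⟨C, hC, hCk⟩ := exists_subset_card_eq hcard
  have hCA : Disjoint A.1 C :=
    disjoint_of_subset_right hC (disjoint_compl_right.mono_left subset_union_left)
  have hCB : Disjoint B.1 C :=
    disjoint_of_subset_right hC (disjoint_compl_right.mono_left subset_union_right)
  exact ⟨⟨C, hCk⟩, kneserGraph_adj_of_disjoint ⟨a, (mem_inter.mp ha).1⟩ hCA,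
    kneserGraph_adj_of_disjoint ⟨a, (mem_inter.mp ha).2⟩ hCB⟩

def kneserGraph.isoOfPerm (σ : Equiv.Perm (Fin m)) : kneserGraph m k ≃g kneserGraph m k where
  toEquiv := σ.finsetCongr.subtypeEquiv fun A => by simp
  map_rel_iff' := by simp [kneserGraph_adj_iff]

lemma kneserGraph_exists_iso_apply_eq (A B : {A : Finset (Fin m) // A.card = k}) :
    ∃ φ : kneserGraph m k ≃g kneserGraph m k, φ A = B := by
  let e := Finset.equivOfCardEq (A.2.trans B.2.symm)
  refine ⟨kneserGraph.isoOfPerm e.extendSubtype, Subtype.ext ?_⟩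
  refine eq_of_subset_of_card_le (fun b hb => ?_) (by simp [kneserGraph.isoOfPerm, A.2, B.2])
  obtain ⟨a, ha, rfl⟩ := mem_map.mp hb
  exact e.extendSubtype_mem a ha

end Kneser

theorem kneser_stackable_general (m k : ℕ) (hm : 3 * k - 1 ≤ m) :
    IsStackable (kneserGraph m k) :=
  isStackable_of_ediam_le_two (kneserGraph_ediam_le_two hm) kneserGraph_exists_iso_apply_eq

theorem kneser_stackable (m k : ℕ) (hk : 2 ≤ k) (hm : 3 * k - 1 ≤ m) :
    IsStackable (kneserGraph m k) :=
  kneser_stackable_general m k hm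
end

section
/- Let m > k ≥ 1 and let J(m,k) be the Johnson graph whose vertices are the k-element subsets of {1,…,m}, two subsets A, B being adjacent iff |A ∩ B| = k − 1. If J(m,k) has diameter two (max over pairs of vertices of their distance equals 2), then J(m,k) is stackable. -/
/-- The Johnson graph J(m,k): vertices are the k-element subsets of {1,…,m},
with A adjacent to B iff |A ∩ B| = k - 1. -/
def johnsonGraph (m k : ℕ) : SimpleGraph {A : Finset (Fin m) // A.card = k} :=
  SimpleGraph.fromRel (fun A B => (A.1 ∩ B.1).card = k - 1)

open Finset

section Stacking

variable {V W : Type*} [DecidableEq V] [DecidableEq W]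

theorem CupMove.of_equiv {G : SimpleGraph V} {H : SimpleGraph W} (e : V ≃ W)
    (he : ∀ u v, H.dist (e u) (e v) = G.dist u v) {C C' : V → ℕ} (h : CupMove G C C') :
    CupMove H (C ∘ e.symm) (C' ∘ e.symm) := by
  obtain ⟨u, v, huv, hu, hv, hd, hC'⟩ := h
  refine ⟨e u, e v, e.injective.ne huv, by simpa using hu, by simpa using hv,
    by simpa [he] using hd, fun w => ?_⟩
  obtain ⟨w, rfl⟩ := e.surjective w
  simp [hC', e.injective.eq_iff]

theorem IsStackable.of_equiv [Fintype V] [Fintype W] {G : SimpleGraph V} {H : SimpleGraph W}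
    (e : V ≃ W) (he : ∀ u v, H.dist (e u) (e v) = G.dist u v) (h : IsStackable G) :
    IsStackable H := by
  intro r
  have hmoves : Relation.ReflTransGen (CupMove H) _ _ :=
    (h (e.symm r)).lift (· ∘ e.symm) fun _ _ => CupMove.of_equiv e he
  unfold IsStackableAt IsStackableConf
  convert hmoves using 1 <;> funext w <;> simp [Fintype.card_congr e]

def cupConf (r : V) (S : Finset V) (n : ℕ) : V → ℕ :=
  fun w => if w = r then n else if w ∈ S then 1 else 0

variable {G : SimpleGraph V} {r : V} {S : Finset V} {n : ℕ}

lemma cupMove_cupConf_erase {u : V} (hrS : r ∉ S) (hu : u ∈ S) (hur : G.dist u r = 1)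
    (hn : 1 ≤ n) : CupMove G (cupConf r S n) (cupConf r (S.erase u) (n + 1)) := by
  have hne : u ≠ r := ne_of_mem_of_not_mem hu hrS
  refine ⟨u, r, hne, by simp [cupConf, hne, hu], by simpa [cupConf],
    by simp [cupConf, hne, hu, hur], fun w => ?_⟩
  by_cases hwr : w = r <;> by_cases hwu : w = u <;> simp_all [cupConf]; omega

lemma reflTransGen_cupConf_erase_erase {u v : V} (hrS : r ∉ S) (hu : u ∈ S) (hv : v ∈ S)
    (hvu : G.Adj v u) (hur : G.dist u r = 2) (hn : 1 ≤ n) :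
    Relation.ReflTransGen (CupMove G) (cupConf r S n)
      (cupConf r ((S.erase v).erase u) (n + 2)) := by
  have hur' : u ≠ r := ne_of_mem_of_not_mem hu hrS
  have hvr : v ≠ r := ne_of_mem_of_not_mem hv hrS
  have huv : u ≠ v := hvu.ne.symm
  let C := Function.update (cupConf r (S.erase v) n) u 2
  have hvu_move : CupMove G (cupConf r S n) C := by
    refine ⟨v, u, huv.symm, by simp [cupConf, hvr, hv], by simp [cupConf, hur', hu],
      by simp [cupConf, hvr, hv, SimpleGraph.dist_eq_one_iff_adj.2 hvu], fun w => ?_⟩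
    by_cases hwu : w = u <;> by_cases hwv : w = v <;> simp_all [C, cupConf]
  have hur_move : CupMove G C (cupConf r ((S.erase v).erase u) (n + 2)) := by
    refine ⟨u, r, hur', by simp [C], by simp [C, cupConf, hur'.symm]; omega,
      by simp [C, hur], fun w => ?_⟩
    by_cases hwu : w = u <;> by_cases hwr : w = r <;> simp_all [C, cupConf]; omega
  exact .tail (.single hvu_move) hur_move

variable {M : G.Subgraph}

lemma reflTransGen_cupConf_empty (hM : M.IsMatching)
    (hdist : ∀ v, v ≠ r → G.dist v r = 1 ∨ G.dist v r = 2) (hrS : r ∉ S)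
    (hpartner : ∀ v ∈ S, G.dist v r = 2 → ∃ w ∈ S, M.Adj v w) (hn : 1 ≤ n) :
    Relation.ReflTransGen (CupMove G) (cupConf r S n) (cupConf r ∅ (n + #S)) := by
  induction S using Finset.strongInduction generalizing n with | H S ih => ?_
  by_cases hfar : ∃ u ∈ S, G.dist u r = 2
  · obtain ⟨u, hu, hur⟩ := hfar
    obtain ⟨w, hw, huw⟩ := hpartner u hu hur
    have huS : u ∈ S.erase w := mem_erase.2 ⟨(M.adj_sub huw).ne, hu⟩
    have hcard : #((S.erase w).erase u) + 2 = #S := by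
      have := card_erase_add_one huS
      have := card_erase_add_one hw
      omega
    refine (reflTransGen_cupConf_erase_erase hrS hu hw (M.adj_sub huw).symm hur hn).trans ?_
    convert ih _ ((erase_ssubset huS).trans (erase_ssubset hw)) (n := n + 2)
      (fun h => hrS (mem_of_mem_erase (mem_of_mem_erase h))) ?_ (by omega) using 2
    · omega
    intro v hv hvr
    obtain ⟨hvu, hvw, hvS⟩ : v ≠ u ∧ v ≠ w ∧ v ∈ S := by simpa using hv
    obtain ⟨x, hx, hvx⟩ := hpartner v hvS hvr
    have hxu : x ≠ u := fun h => hvw (hM.eq_of_adj_right (h ▸ hvx) huw.symm)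
    have hxw : x ≠ w := fun h => hvu (hM.eq_of_adj_right (h ▸ hvx) huw)
    exact ⟨x, by simp [hxu, hxw, hx], hvx⟩
  · push Not at hfar
    obtain rfl | ⟨u, hu⟩ := S.eq_empty_or_nonempty
    · exact .refl
    have hur : G.dist u r = 1 :=
      (hdist u (ne_of_mem_of_not_mem hu hrS)).resolve_right (hfar u hu)
    refine .head (cupMove_cupConf_erase hrS hu hur hn) ?_
    convert ih _ (erase_ssubset hu) (n := n + 1) (fun h => hrS (mem_of_mem_erase h))
      (fun v hv hvr => absurd hvr (hfar v (mem_of_mem_erase hv))) (by omega) using 2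
    have := card_erase_add_one hu
    omega

theorem isStackableAt_of_isMatching [Fintype V] (hM : M.IsMatching) (hr : r ∉ M.verts)
    (hdist : ∀ v, v ≠ r → G.dist v r = 1 ∨ G.dist v r = 2)
    (hcover : ∀ v, G.dist v r = 2 → v ∈ M.verts) : IsStackableAt G r := by
  have hmoves := reflTransGen_cupConf_empty (S := univ.erase r) (n := 1) hM hdist
    (notMem_erase r _) ?_ le_rfl
  · unfold IsStackableAt IsStackableConf
    convert hmoves using 1 <;> funext w
    · by_cases hw : w = r <;> simp [cupConf, hw]
    · have := Fintype.card_pos_iff.2 ⟨r⟩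
      by_cases hw : w = r <;> simp [cupConf, hw, card_erase_of_mem]
      omega
  intro v hv hvr
  obtain ⟨w, hvw⟩ := hM (hcover v hvr)
  have hwr : w ≠ r := fun h => hr (h ▸ M.edge_vert hvw.1.symm)
  exact ⟨w, mem_erase.2 ⟨hwr, mem_univ w⟩, hvw.1⟩

end Stacking

namespace SimpleGraph.Subgraph

variable {V : Type*} {G : SimpleGraph V} {M : G.Subgraph} {W K : Set V}

def IsNearPerfectMatchingOn (M : G.Subgraph) (W : Set V) : Prop :=
  M.IsMatching ∧ M.verts ⊆ W ∧ (W \ M.verts).Subsingleton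

lemma isNearPerfectMatchingOn_bot (hW : W.Subsingleton) :
    (⊥ : G.Subgraph).IsNearPerfectMatchingOn W :=
  ⟨fun _ hv => hv.elim, Set.empty_subset W, hW.anti Set.sdiff_subset⟩

lemma IsMatching.sup_subgraphOfAdj (hM : M.IsMatching) {v w : V} (hvw : G.Adj v w)
    (hv : v ∉ M.verts) (hw : w ∉ M.verts) : (M ⊔ G.subgraphOfAdj hvw).IsMatching :=
  hM.sup (.subgraphOfAdj hvw) <| by
    rw [hM.support_eq_verts, (IsMatching.subgraphOfAdj hvw).support_eq_verts,
      subgraphOfAdj_verts, Set.disjoint_insert_right, Set.disjoint_singleton_right]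
    exact ⟨hv, hw⟩

lemma IsNearPerfectMatchingOn.union_of_isClique_of_even (h : M.IsNearPerfectMatchingOn W)
    (hK : G.IsClique K) (hKfin : K.Finite) (hKeven : Even K.ncard) (hWK : Disjoint W K) :
    ∃ M' : G.Subgraph, M'.IsNearPerfectMatchingOn (W ∪ K) := by
  obtain ⟨N, hNK, hN⟩ := (hK.even_iff_exists_isMatching hKfin).1 hKeven
  refine ⟨M ⊔ N, h.1.sup hN ?_, ?_, h.2.2.anti ?_⟩
  · rw [h.1.support_eq_verts, hN.support_eq_verts, hNK]
    exact hWK.mono_left h.2.1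
  · rw [verts_sup, hNK]
    exact Set.union_subset_union_left K h.2.1
  · rw [verts_sup, hNK]
    intro v
    simp only [Set.mem_union, Set.mem_sdiff]
    tauto

lemma IsNearPerfectMatchingOn.union_singleton (h : M.IsNearPerfectMatchingOn W) {x : V}
    (hxW : x ∉ W) (hx : ∀ v ∈ W \ M.verts, G.Adj v x) :
    ∃ M' : G.Subgraph, M'.IsNearPerfectMatchingOn (W ∪ {x}) := by
  rcases h.2.2.eq_empty_or_singleton with hleft | ⟨v, hleft⟩
  · refine ⟨M, h.1, h.2.1.trans Set.subset_union_left,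
      (Set.subsingleton_singleton (a := x)).anti ?_⟩
    rw [Set.union_sdiff_distrib, hleft, Set.empty_union]
    exact Set.sdiff_subset
  have hvW : v ∈ W \ M.verts := hleft ▸ rfl
  have hvx := hx v hvW
  refine ⟨M ⊔ G.subgraphOfAdj hvx, h.1.sup_subgraphOfAdj hvx hvW.2 fun hxM => hxW (h.2.1 hxM),
    ?_, Set.subsingleton_empty.anti fun u ⟨hu, huM⟩ => ?_⟩
  · rw [verts_sup, subgraphOfAdj_verts]
    exact Set.union_subset (h.2.1.trans Set.subset_union_left)
      (Set.insert_subset (Or.inl hvW.1) (Set.singleton_subset_iff.2 (Or.inr rfl)))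
  · rw [verts_sup, subgraphOfAdj_verts] at huM
    simp only [Set.mem_union, Set.mem_insert_iff, Set.mem_singleton_iff, not_or] at hu huM
    rcases hu with hu | rfl
    · exact huM.2.1 (hleft.subset ⟨hu, huM.1⟩)
    · exact huM.2.2 rfl

lemma IsNearPerfectMatchingOn.union_of_isClique (h : M.IsNearPerfectMatchingOn W)
    (hK : G.IsClique K) (hKfin : K.Finite) (hWK : Disjoint W K)
    (hnbr : ∀ v ∈ W \ M.verts, ∃ x ∈ K, G.Adj v x) :
    ∃ M' : G.Subgraph, M'.IsNearPerfectMatchingOn (W ∪ K) := by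
  rcases Nat.even_or_odd K.ncard with hKeven | hKodd
  · exact h.union_of_isClique_of_even hK hKfin hKeven hWK
  -- move one vertex `x ∈ K`, adjacent to the leftover of `M` if any, over to `W`
  obtain ⟨x, hxK, hx⟩ : ∃ x ∈ K, ∀ v ∈ W \ M.verts, G.Adj v x := by
    rcases h.2.2.eq_empty_or_singleton with hleft | ⟨v, hleft⟩
    · obtain ⟨x, hx⟩ := Set.nonempty_of_ncard_ne_zero hKodd.pos.ne'
      exact ⟨x, hx, fun v hv => (hleft.subset hv).elim⟩
    · obtain ⟨x, hxK, hvx⟩ := hnbr v (hleft ▸ rfl)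
      exact ⟨x, hxK, fun u hu => (hleft.subset hu : u = v) ▸ hvx⟩
  obtain ⟨M₁, hM₁⟩ := h.union_singleton (hWK.notMem_of_mem_right hxK) hx
  have hdisj : Disjoint (W ∪ {x}) (K \ {x}) :=
    Set.disjoint_union_left.2 ⟨hWK.mono_right Set.sdiff_subset,
      Set.disjoint_singleton_left.2 fun hx => hx.2 rfl⟩
  have hKx_even : Even (K \ {x}).ncard := by
    rw [Set.ncard_sdiff_singleton_of_mem hxK]
    exact Nat.Odd.sub_odd hKodd odd_one
  have := hM₁.union_of_isClique_of_even (hK.subset Set.sdiff_subset)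
    (hKfin.subset Set.sdiff_subset) hKx_even hdisj
  rwa [Set.union_assoc, Set.union_sdiff_cancel (Set.singleton_subset_iff.2 hxK)] at this

lemma IsNearPerfectMatchingOn.exists_isMatching (h : M.IsNearPerfectMatchingOn W) {r : V}
    (hr : r ∉ W) (hnbr : ∀ v ∈ W \ M.verts, ∃ w ∉ W, w ≠ r ∧ G.Adj v w) :
    ∃ M' : G.Subgraph, M'.IsMatching ∧ r ∉ M'.verts ∧ W ⊆ M'.verts := by
  rcases h.2.2.eq_empty_or_singleton with hleft | ⟨v, hleft⟩
  · exact ⟨M, h.1, fun hrM => hr (h.2.1 hrM), Set.sdiff_eq_empty.1 hleft⟩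
  have hvW : v ∈ W \ M.verts := hleft ▸ rfl
  obtain ⟨w, hwW, hwr, hvw⟩ := hnbr v hvW
  refine ⟨M ⊔ G.subgraphOfAdj hvw, h.1.sup_subgraphOfAdj hvw hvW.2 fun hwM => hwW (h.2.1 hwM),
    ?_, ?_⟩
  · rw [verts_sup, subgraphOfAdj_verts]
    simp only [Set.mem_union, Set.mem_insert_iff, Set.mem_singleton_iff, not_or]
    exact ⟨fun hrM => hr (h.2.1 hrM), fun hrv => hr (hrv ▸ hvW.1), hwr.symm⟩
  · intro u hu
    by_cases huM : u ∈ M.verts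
    · exact Or.inl huM
    · exact Or.inr (Or.inl (hleft.subset ⟨hu, huM⟩))

end SimpleGraph.Subgraph

namespace johnsonGraph

variable {m k : ℕ}

lemma card_sdiff_eq_zero_iff {A B : {A : Finset (Fin m) // A.card = k}} :
    #(A.1 \ B.1) = 0 ↔ A = B := by
  rw [card_eq_zero, sdiff_eq_empty_iff_subset, Subtype.ext_iff]
  exact ⟨fun h => eq_of_subset_of_card_le h (by rw [A.2, B.2]), fun h => h.subset⟩

theorem adj_iff {A B : {A : Finset (Fin m) // A.card = k}} :
    (johnsonGraph m k).Adj A B ↔ #(A.1 \ B.1) = 1 := by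
  have hA := card_sdiff_add_card_inter A.1 B.1
  rw [A.2] at hA
  rw [johnsonGraph, SimpleGraph.fromRel_adj, inter_comm B.1, or_self, ne_eq,
    ← card_sdiff_eq_zero_iff]
  omega

def exchange (A : {A : Finset (Fin m) // A.card = k}) {x y : Fin m} (hx : x ∈ A.1)
    (hy : y ∉ A.1) : {A : Finset (Fin m) // A.card = k} :=
  ⟨insert y (A.1.erase x), by
    rw [card_insert_of_notMem fun h => hy (mem_of_mem_erase h), card_erase_add_one hx, A.2]⟩

lemma sdiff_exchange (A : {A : Finset (Fin m) // A.card = k}) {x y : Fin m} (hx : x ∈ A.1)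
    (hy : y ∉ A.1) : A.1 \ (exchange A hx hy).1 = {x} := by
  ext z
  simp only [exchange, mem_sdiff, mem_insert, mem_erase, mem_singleton]
  constructor
  · intro h; by_contra hzx; exact h.2 (Or.inr ⟨hzx, h.1⟩)
  · rintro rfl; exact ⟨hx, by rintro (rfl | h); exacts [hy hx, h.1 rfl]⟩

lemma adj_exchange (A : {A : Finset (Fin m) // A.card = k}) {x y : Fin m} (hx : x ∈ A.1)
    (hy : y ∉ A.1) : (johnsonGraph m k).Adj A (exchange A hx hy) := by
  rw [adj_iff, sdiff_exchange, card_singleton]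

lemma card_sdiff_le_length {A B : {A : Finset (Fin m) // A.card = k}}
    (p : (johnsonGraph m k).Walk A B) : #(A.1 \ B.1) ≤ p.length := by
  induction p with
  | nil => simp
  | @cons A C B hAC p ih =>
    rw [SimpleGraph.Walk.length_cons]
    calc #(A.1 \ B.1) ≤ #(A.1 \ C.1) + #(C.1 \ B.1) :=
          (card_le_card (sdiff_triangle _ _ _)).trans (card_union_le _ _)
      _ ≤ p.length + 1 := by rw [adj_iff.1 hAC]; omega

lemma exists_walk_length_eq_card_sdiff (A B : {A : Finset (Fin m) // A.card = k}) :
    ∃ p : (johnsonGraph m k).Walk A B, p.length = #(A.1 \ B.1) := by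
  induction hn : #(A.1 \ B.1) generalizing A with
  | zero =>
    obtain rfl := card_sdiff_eq_zero_iff.1 hn
    exact ⟨.nil, rfl⟩
  | succ n ih =>
    obtain ⟨x, hx⟩ : (A.1 \ B.1).Nonempty := card_pos.1 (by omega)
    obtain ⟨y, hy⟩ : (B.1 \ A.1).Nonempty :=
      card_pos.1 (by rw [← card_sdiff_comm (A.2.trans B.2.symm)]; omega)
    rw [mem_sdiff] at hx hy
    have hCB : #((exchange A hx.1 hy.2).1 \ B.1) = n := by
      have : (exchange A hx.1 hy.2).1 \ B.1 = (A.1 \ B.1).erase x := by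
        ext z
        simp only [exchange, mem_sdiff, mem_insert, mem_erase]
        constructor
        · rintro ⟨rfl | ⟨hzx, hzA⟩, hzB⟩
          exacts [absurd hy.1 hzB, ⟨hzx, hzA, hzB⟩]
        · rintro ⟨hzx, hzA, hzB⟩
          exact ⟨Or.inr ⟨hzx, hzA⟩, hzB⟩
      rw [this, card_erase_of_mem (mem_sdiff.2 hx), hn, Nat.add_sub_cancel]
    obtain ⟨p, hp⟩ := ih _ hCB
    exact ⟨.cons (adj_exchange A hx.1 hy.2) p, by rw [SimpleGraph.Walk.length_cons, hp]⟩

theorem dist_eq (A B : {A : Finset (Fin m) // A.card = k}) :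
    (johnsonGraph m k).dist A B = #(A.1 \ B.1) := by
  obtain ⟨p, hp⟩ := exists_walk_length_eq_card_sdiff A B
  obtain ⟨q, hq⟩ := p.reachable.exists_walk_length_eq_dist
  exact le_antisymm (hp ▸ SimpleGraph.dist_le p) (hq ▸ card_sdiff_le_length q)

lemma card_sdiff_add_le (A B : {A : Finset (Fin m) // A.card = k}) : #(A.1 \ B.1) + k ≤ m := by
  have hunion := card_sdiff_add_card A.1 B.1
  rw [B.2] at hunion
  rw [hunion]
  exact (card_le_univ _).trans_eq (Fintype.card_fin m)

lemma exists_card_sdiff_eq {d : ℕ} (hdk : d ≤ k) (hdm : d + k ≤ m) :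
    ∃ A B : {A : Finset (Fin m) // A.card = k}, #(A.1 \ B.1) = d := by
  obtain ⟨B, -, hB⟩ := exists_subset_card_eq (s := (univ : Finset (Fin m))) (n := k)
    (by rw [card_univ, Fintype.card_fin]; omega)
  obtain ⟨X, hXB, hX⟩ := exists_subset_card_eq (hB ▸ hdk : d ≤ #B)
  obtain ⟨Y, hYB, hY⟩ := exists_subset_card_eq (s := Bᶜ) (n := d)
    (by rw [card_compl, Fintype.card_fin, hB]; omega)
  have hdisj : Disjoint (B \ X) Y :=
    disjoint_of_subset_left sdiff_subset (subset_compl_iff_disjoint_left.1 hYB)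
  refine ⟨⟨B \ X ∪ Y, ?_⟩, ⟨B, hB⟩, ?_⟩
  · rw [card_union_of_disjoint hdisj, card_sdiff_of_subset hXB, hB, hX, hY]
    omega
  · rw [union_sdiff_distrib, sdiff_eq_empty_iff_subset.2 (sdiff_subset : B \ X ⊆ B), empty_union,
      sdiff_eq_self_of_disjoint (subset_compl_iff_disjoint_right.1 hYB), hY]

def complEquiv {j : ℕ} (h : j + k = m) :
    {A : Finset (Fin m) // A.card = j} ≃ {A : Finset (Fin m) // A.card = k} where
  toFun A := ⟨A.1ᶜ, by rw [card_compl, Fintype.card_fin, A.2]; omega⟩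
  invFun B := ⟨B.1ᶜ, by rw [card_compl, Fintype.card_fin, B.2]; omega⟩
  left_inv A := by simp
  right_inv B := by simp

lemma dist_complEquiv {j : ℕ} (h : j + k = m) (A B : {A : Finset (Fin m) // A.card = j}) :
    (johnsonGraph m k).dist (complEquiv h A) (complEquiv h B) = (johnsonGraph m j).dist A B := by
  rw [dist_eq, dist_eq]
  change #(A.1ᶜ \ B.1ᶜ) = _
  rw [compl_sdiff_compl]
  exact card_sdiff_comm (B.2.trans A.2.symm)

lemma isClique_setOf_mem (a : Fin m) : (johnsonGraph m 2).IsClique {A | a ∈ A.1} := by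
  intro A hA B hB hAB
  have hle : #(A.1 \ B.1) ≤ #(A.1.erase a) := card_le_card fun z hz =>
    mem_erase.2 ⟨fun hza => (mem_sdiff.1 hz).2 (hza ▸ hB), (mem_sdiff.1 hz).1⟩
  rw [card_erase_of_mem hA, A.2] at hle
  have hne := card_sdiff_eq_zero_iff.not.2 hAB
  rw [adj_iff]
  omega

lemma exists_isNearPerfectMatchingOn_setOf_subset (s : Finset (Fin m)) :
    ∃ M : (johnsonGraph m 2).Subgraph, M.IsNearPerfectMatchingOn {A | A.1 ⊆ s} := by
  induction s using Finset.induction_on with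
  | empty =>
    refine ⟨⊥, SimpleGraph.Subgraph.isNearPerfectMatchingOn_bot fun A hA B hB => ?_⟩
    exact Subtype.ext ((subset_empty.1 hA).trans (subset_empty.1 hB).symm)
  | @insert a s ha ih =>
    obtain ⟨M, hM⟩ := ih
    have hsplit : {A : {A : Finset (Fin m) // #A = 2} | A.1 ⊆ insert a s} =
        {A | A.1 ⊆ s} ∪ {A | a ∈ A.1 ∧ A.1 ⊆ insert a s} := by
      ext A
      by_cases haA : a ∈ A.1
      · simpa [haA] using fun h : A.1 ⊆ s => h.trans (subset_insert a s)
      · simp [haA, subset_insert_iff_of_notMem haA]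
    rw [hsplit]
    refine hM.union_of_isClique ((isClique_setOf_mem a).subset fun A hA => hA.1) (Set.toFinite _)
      (Set.disjoint_left.2 fun A hAs haA => ha (hAs haA.1)) fun ℓ hℓ => ?_
    obtain ⟨q, hq⟩ := card_pos.1 (by rw [ℓ.2]; exact two_pos)
    have haℓ : a ∉ ℓ.1 := fun h => ha (hℓ.1 h)
    exact ⟨exchange ℓ hq haℓ, ⟨mem_insert_self _ _, insert_subset_insert _
      ((erase_subset _ _).trans hℓ.1)⟩, adj_exchange ℓ hq haℓ⟩

lemma dist_eq_two_iff (A r : {A : Finset (Fin m) // #A = 2}) :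
    (johnsonGraph m 2).dist A r = 2 ↔ A.1 ⊆ r.1ᶜ := by
  rw [dist_eq, subset_compl_iff_disjoint_right, ← Finset.sdiff_eq_self_iff_disjoint]
  exact ⟨fun h => eq_of_subset_of_card_le sdiff_subset (by rw [h, A.2]),
    fun h => by rw [h, A.2]⟩

theorem isStackable_two (m : ℕ) : IsStackable (johnsonGraph m 2) := by
  intro r
  obtain ⟨M, hM⟩ := exists_isNearPerfectMatchingOn_setOf_subset r.1ᶜ
  obtain ⟨a, ha⟩ := card_pos.1 (by rw [r.2]; exact two_pos)
  have hr : r ∉ {A | A.1 ⊆ r.1ᶜ} := fun h => mem_compl.1 (h ha) ha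
  obtain ⟨M', hM', hrM', hcover⟩ := hM.exists_isMatching hr fun ℓ hℓ => by
    obtain ⟨q, hq⟩ := card_pos.1 (by rw [ℓ.2]; exact two_pos)
    have haℓ : a ∉ ℓ.1 := fun h => mem_compl.1 (hℓ.1 h) ha
    refine ⟨exchange ℓ hq haℓ, fun h => mem_compl.1 (h (mem_insert_self a _)) ha,
      fun h => ?_, adj_exchange ℓ hq haℓ⟩
    have h1 := SimpleGraph.dist_eq_one_iff_adj.2 (h ▸ adj_exchange ℓ hq haℓ)
    rw [(dist_eq_two_iff ℓ r).2 hℓ.1] at h1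
    omega
  refine isStackableAt_of_isMatching hM' hrM' (fun A hA => ?_)
    fun A hA => hcover ((dist_eq_two_iff A r).1 hA)
  have hle := (card_le_card (sdiff_subset : A.1 \ r.1 ⊆ A.1)).trans_eq A.2
  have hne := card_sdiff_eq_zero_iff.not.2 hA
  rw [dist_eq]
  omega

end johnsonGraph

theorem johnson_diam_two_stackable_general (m k : ℕ)
    (hdiam_le : ∀ A B : {A : Finset (Fin m) // A.card = k},
      (johnsonGraph m k).dist A B ≤ 2)
    (hdiam_eq : ∃ A B : {A : Finset (Fin m) // A.card = k},
      (johnsonGraph m k).dist A B = 2) :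
    IsStackable (johnsonGraph m k) := by
  obtain ⟨A, B, hAB⟩ := hdiam_eq
  rw [johnsonGraph.dist_eq] at hAB
  have hk : 2 ≤ k := hAB ▸ (card_le_card sdiff_subset).trans_eq A.2
  have hmk : 2 + k ≤ m := hAB ▸ johnsonGraph.card_sdiff_add_le A B
  -- the diameter of J(m,k) is min(k, m - k)
  obtain rfl | hm : k = 2 ∨ 2 + k = m := by
    by_contra! h
    obtain ⟨A', B', h3⟩ := johnsonGraph.exists_card_sdiff_eq (m := m) (k := k) (d := 3)
      (by omega) (by omega)
    have := hdiam_le A' B'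
    rw [johnsonGraph.dist_eq, h3] at this
    omega
  · exact johnsonGraph.isStackable_two m
  · exact (johnsonGraph.isStackable_two m).of_equiv (johnsonGraph.complEquiv hm)
      (johnsonGraph.dist_complEquiv hm)

theorem johnson_diam_two_stackable (m k : ℕ) (hk : 1 ≤ k) (hkm : k < m)
    (hdiam_le : ∀ A B : {A : Finset (Fin m) // A.card = k},
      (johnsonGraph m k).dist A B ≤ 2)
    (hdiam_eq : ∃ A B : {A : Finset (Fin m) // A.card = k},
      (johnsonGraph m k).dist A B = 2) :
    IsStackable (johnsonGraph m k) :=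
  johnson_diam_two_stackable_general m k hdiam_le hdiam_eq
end

section
/- For every n ≥ 1 there exists a function φ, defined on the family of subsets X of {1,…,n} with 2|X| > n, such that φ is injective and, for every such X, φ(X) ⊆ X and |φ(X)| = |X| − 1 (so in particular |φ(X)| ≥ ⌊n/2⌋). -/
/-!
Above the middle rank the shadow of a family is at least as large as the family: on a single
layer this is the local LYM inequality, and distinct layers have disjoint shadows. This is Hall's
condition for choosing, injectively, one set of the shadow of each set `X` with `2|X| > n`.
-/

open Finset FinsetFamily

namespace Finset

variable {α : Type*} [DecidableEq α] [Fintype α] {𝒜 : Finset (Finset α)}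

theorem card_le_card_shadow_of_sized {k : ℕ} (h𝒜 : (𝒜 : Set (Finset α)).Sized k)
    (hk : Fintype.card α < 2 * k) : #𝒜 ≤ #(∂ 𝒜) := by
  have hLYM := local_lubell_yamamoto_meshalkin_inequality_mul h𝒜
  have hmul : #𝒜 * k ≤ #(∂ 𝒜) * k :=
    hLYM.trans (Nat.mul_le_mul_left _ (by omega))
  exact Nat.le_of_mul_le_mul_right hmul (by omega)

theorem card_le_card_shadow_of_forall_card_lt (h𝒜 : ∀ s ∈ 𝒜, Fintype.card α < 2 * #s) :
    #𝒜 ≤ #(∂ 𝒜) := by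
  set layer : ℕ → Finset (Finset α) := fun r => {s ∈ 𝒜 | #s = r}
  have hlayer_sized (r : ℕ) : (layer r : Set (Finset α)).Sized r :=
    fun s hs => (mem_filter.1 hs).2
  have hlayer_big {r : ℕ} (hr : r ∈ 𝒜.image card) : Fintype.card α < 2 * r := by
    obtain ⟨s, hs, rfl⟩ := mem_image.1 hr
    exact h𝒜 s hs
  have hdisjoint : (𝒜.image card : Set ℕ).PairwiseDisjoint fun r => ∂ (layer r) := by
    intro r hr r' hr' hne
    refine disjoint_left.2 fun t ht ht' => hne ?_
    have h₁ := (hlayer_sized r).shadow ht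
    have h₂ := (hlayer_sized r').shadow ht'
    have := hlayer_big hr
    have := hlayer_big hr'
    omega
  calc #𝒜 = ∑ r ∈ 𝒜.image card, #(layer r) :=
        card_eq_sum_card_fiberwise fun s hs => mem_image_of_mem _ hs
    _ ≤ ∑ r ∈ 𝒜.image card, #(∂ (layer r)) :=
        sum_le_sum fun r hr => card_le_card_shadow_of_sized (hlayer_sized r) (hlayer_big hr)
    _ = #((𝒜.image card).biUnion fun r => ∂ (layer r)) := (card_biUnion hdisjoint).symm
    _ ≤ #(∂ 𝒜) := card_le_card <| biUnion_subset.2 fun r _ => shadow_mono (filter_subset _ _)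

theorem exists_injective_erase_of_card_lt :
    ∃ φ : {s : Finset α // Fintype.card α < 2 * #s} → Finset α,
      Function.Injective φ ∧ ∀ s, ∃ a ∈ s.1, s.1.erase a = φ s := by
  have hall (A : Finset {s : Finset α // Fintype.card α < 2 * #s}) :
      #A ≤ #(A.biUnion fun s => s.1.image s.1.erase) := by
    have hshadow :
        A.biUnion (fun s => s.1.image s.1.erase) = ∂ (A.map (Function.Embedding.subtype _)) := by
      rw [shadow, sup_map, sup_eq_biUnion]
      rfl
    rw [hshadow, ← card_map (Function.Embedding.subtype _)]
    refine card_le_card_shadow_of_forall_card_lt fun s hs => ?_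
    obtain ⟨s, _, rfl⟩ := mem_map.1 hs
    exact s.2
  obtain ⟨φ, hφ, hmem⟩ := (all_card_le_biUnion_card_iff_exists_injective _).1 hall
  exact ⟨φ, hφ, fun s => mem_image.1 (hmem s)⟩

end Finset

theorem symmetric_chain_injection_general (n : ℕ) :
    ∃ φ : Finset (Fin n) → Finset (Fin n),
      (∀ X Y : Finset (Fin n), n < 2 * X.card → n < 2 * Y.card → φ X = φ Y → X = Y) ∧
      (∀ X : Finset (Fin n), n < 2 * X.card →
        φ X ⊆ X ∧ (φ X).card = X.card - 1 ∧ n / 2 ≤ (φ X).card) := by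
  obtain ⟨φ, hφ, hφ_erase⟩ := exists_injective_erase_of_card_lt (α := Fin n)
  have hbig {X : Finset (Fin n)} (hX : n < 2 * #X) : Fintype.card (Fin n) < 2 * #X := by
    rwa [Fintype.card_fin]
  refine ⟨fun X => if hX : n < 2 * #X then φ ⟨X, hbig hX⟩ else X, ?_, ?_⟩
  · intro X Y hX hY hXY
    simp only [dif_pos hX, dif_pos hY] at hXY
    exact congrArg Subtype.val (hφ hXY)
  · intro X hX
    obtain ⟨a, ha, hφa⟩ : ∃ a ∈ X, X.erase a = φ ⟨X, hbig hX⟩ :=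
      hφ_erase ⟨X, hbig hX⟩
    simp only [dif_pos hX, ← hφa]
    exact ⟨erase_subset _ _, card_erase_of_mem ha, by rw [card_erase_of_mem ha]; omega⟩

theorem symmetric_chain_injection (n : ℕ) (hn : 1 ≤ n) :
    ∃ φ : Finset (Fin n) → Finset (Fin n),
      (∀ X Y : Finset (Fin n), n < 2 * X.card → n < 2 * Y.card → φ X = φ Y → X = Y) ∧
      (∀ X : Finset (Fin n), n < 2 * X.card →
        φ X ⊆ X ∧ (φ X).card = X.card - 1 ∧ n / 2 ≤ (φ X).card) :=
  symmetric_chain_injection_general n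
end

section
/- For every l ≤ 3 and every d ≥ l + 4, every level-l 4-cube in the hypercube Q^d is 0-stackable: for all disjoint subsets S, K of {1,…,d} with |S| = l and |K| = 4, letting A = {X : S ⊆ X ⊆ S ∪ K} and letting C_A be the configuration with one cup on each vertex of A ∪ {∅} and no cups elsewhere, Q^d is (C_A, ∅)-stackable. -/
open scoped symmDiff in
/-- The d-dimensional hypercube: vertices are subsets of {1,…,d}, adjacent iff
the symmetric difference has exactly one element. -/
def cubeGraph (d : ℕ) : SimpleGraph (Finset (Fin d)) :=
  SimpleGraph.fromRel (fun X Y => (X ∆ Y).card = 1)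


open scoped symmDiff
open Finset Function

section CubeDistance

variable {d : ℕ}

lemma cubeGraph_adj {X Y : Finset (Fin d)} : (cubeGraph d).Adj X Y ↔ #(X ∆ Y) = 1 := by
  simp only [cubeGraph, SimpleGraph.fromRel_adj, symmDiff_comm Y X, or_self,
    and_iff_right_iff_imp]
  rintro h rfl
  simp at h

lemma exists_walk_symmDiff (X s : Finset (Fin d)) :
    ∃ w : (cubeGraph d).Walk X (X ∆ s), w.length = #s := by
  induction s using Finset.induction_on generalizing X with
  | empty => exact ⟨.copy .nil rfl (symmDiff_bot X).symm, by simp⟩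
  | insert a t ha ih =>
    have hadj : (cubeGraph d).Adj X (X ∆ {a}) := by
      rw [cubeGraph_adj, symmDiff_symmDiff_cancel_left, card_singleton]
    have hstep : (X ∆ {a}) ∆ t = X ∆ insert a t := by
      rw [symmDiff_assoc, (disjoint_singleton_left.mpr ha).symmDiff_eq_sup, insert_eq]
      rfl
    obtain ⟨w, hw⟩ := ih (X ∆ {a})
    rw [← hstep]
    exact ⟨.cons hadj w, by simp [hw, card_insert_of_notMem ha]⟩

lemma card_symmDiff_le_length {X Y : Finset (Fin d)} (w : (cubeGraph d).Walk X Y) :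
    #(X ∆ Y) ≤ w.length := by
  induction w with
  | nil => simp
  | @cons u v y h p ih =>
    have htri : #(u ∆ y) ≤ #(u ∆ v) + #(v ∆ y) :=
      (card_le_card (symmDiff_triangle u v y)).trans (card_union_le _ _)
    rw [SimpleGraph.Walk.length_cons, ← cubeGraph_adj.mp h]
    omega

theorem cubeGraph_dist (X Y : Finset (Fin d)) : (cubeGraph d).dist X Y = #(X ∆ Y) := by
  obtain ⟨w₀, hw₀⟩ := exists_walk_symmDiff X (X ∆ Y)
  let w := w₀.copy rfl (symmDiff_symmDiff_cancel_left X Y)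
  have hw : w.length = #(X ∆ Y) := by simp [w, hw₀]
  obtain ⟨p, hp⟩ := SimpleGraph.Reachable.exists_walk_length_eq_dist ⟨w⟩
  exact le_antisymm (hw ▸ SimpleGraph.dist_le w) (hp ▸ card_symmDiff_le_length p)

lemma cubeGraph_dist_empty_left (X : Finset (Fin d)) : (cubeGraph d).dist ∅ X = #X := by
  rw [cubeGraph_dist, ← bot_eq_empty, bot_symmDiff]

end CubeDistance

section Subcube

variable {α κ : Type*} {S : Finset α} {e : κ ↪ α}

lemma disjoint_map_of_notMem (hS : ∀ i, e i ∉ S) (T : Finset κ) : Disjoint S (T.map e) :=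
  disjoint_right.mpr fun _ hx => by obtain ⟨i, -, rfl⟩ := mem_map.mp hx; exact hS i

variable [DecidableEq α]

lemma union_map_injective (hS : ∀ i, e i ∉ S) : Injective fun T : Finset κ => S ∪ T.map e := by
  intro T T' (h : S ∪ T.map e = S ∪ T'.map e)
  apply map_injective e
  rw [← union_sdiff_cancel_left (disjoint_map_of_notMem hS T), h,
    union_sdiff_cancel_left (disjoint_map_of_notMem hS T')]

lemma union_map_symmDiff [DecidableEq κ] (hS : ∀ i, e i ∉ S) (T T' : Finset κ) :
    (S ∪ T.map e) ∆ (S ∪ T'.map e) = (T ∆ T').map e := by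
  have hmap : (T ∆ T').map e = T.map e ∆ T'.map e := by
    simp only [map_eq_image, image_symmDiff _ _ e.injective]
  rw [hmap]
  ext x
  by_cases hx : x ∈ S
  · have hT := disjoint_left.mp (disjoint_map_of_notMem hS T) hx
    have hT' := disjoint_left.mp (disjoint_map_of_notMem hS T') hx
    simp [mem_symmDiff, hx, hT, hT']
  · simp [mem_symmDiff, hx]

lemma card_union_map (hS : ∀ i, e i ∉ S) (T : Finset κ) : #(S ∪ T.map e) = #S + #T := by
  rw [card_union_of_disjoint (disjoint_map_of_notMem hS T), card_map]

lemma exists_union_map_eq_iff [Fintype κ] {X : Finset α} :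
    (∃ T : Finset κ, S ∪ T.map e = X) ↔ S ⊆ X ∧ X ⊆ S ∪ univ.map e := by
  constructor
  · rintro ⟨T, rfl⟩
    exact ⟨subset_union_left, union_subset_union_right (map_subset_map.mpr (subset_univ T))⟩
  · rintro ⟨hSX, hXS⟩
    obtain ⟨T, -, hT⟩ := subset_map_iff.mp (sdiff_le_iff.mpr hXS)
    exact ⟨T, by rw [← hT, union_sdiff_of_subset hSX]⟩

end Subcube

section Plan

variable {ι V : Type*}

lemma sum_extend_zero [Fintype ι] [Fintype V] {f : ι → V} (hf : Injective f) (c : ι → ℕ) :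
    ∑ w, extend f c 0 w = ∑ i, c i :=
  (Fintype.sum_of_injective f hf c _ (fun w hw => extend_apply' c (0 : V → ℕ) w hw)
    fun i => (hf.extend_apply c 0 i).symm).symm

variable [DecidableEq ι]

def runPlan (D : ι → ι → ℕ) : List (ι × ι) → (ι → ℕ) → Option (ι → ℕ)
  | [], c => some c
  | (u, v) :: plan, c =>
    if u ≠ v ∧ 1 ≤ c u ∧ 1 ≤ c v ∧ D u v = c u then
      runPlan D plan fun w => if w = u then 0 else if w = v then c u + c v else c w
    else none

variable [DecidableEq V] (G : SimpleGraph V) {f : ι → V} (hf : Injective f)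
  {D : ι → ι → ℕ} (hD : ∀ i j, G.dist (f i) (f j) = D i j)
include hf hD

lemma cupMove_extend {u v : ι} {c : ι → ℕ} (huv : u ≠ v) (hu : 1 ≤ c u) (hv : 1 ≤ c v)
    (hd : D u v = c u) :
    CupMove G (extend f c 0)
      (extend f (fun w => if w = u then 0 else if w = v then c u + c v else c w) 0) := by
  refine ⟨f u, f v, hf.ne huv, ?_, ?_, ?_, fun w => ?_⟩
  · rwa [hf.extend_apply]
  · rwa [hf.extend_apply]
  · rwa [hf.extend_apply, hD]
  · by_cases hw : ∃ i, f i = w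
    · obtain ⟨i, rfl⟩ := hw
      simp only [hf.extend_apply, hf.eq_iff]
    · have hu : w ≠ f u := fun h => hw ⟨u, h.symm⟩
      have hv : w ≠ f v := fun h => hw ⟨v, h.symm⟩
      simp only [extend_apply' _ _ _ hw, if_neg hu, if_neg hv]

lemma reflTransGen_cupMove_of_runPlan :
    ∀ {plan : List (ι × ι)} {c c' : ι → ℕ}, runPlan D plan c = some c' →
      Relation.ReflTransGen (CupMove G) (extend f c 0) (extend f c' 0)
  | [], c, c', h => by
    cases Option.some.inj h
    exact .refl
  | (u, v) :: plan, c, c', h => by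
    rw [runPlan] at h
    split_ifs at h with hmove
    obtain ⟨huv, hu, hv, hd⟩ := hmove
    exact .head (cupMove_extend G hf hD huv hu hv hd)
      (reflTransGen_cupMove_of_runPlan h)

theorem isStackableConf_extend_of_runPlan [Fintype ι] [Fintype V] {c : ι → ℕ} {r : ι}
    {plan : List (ι × ι)} (h : runPlan D plan c = some (Pi.single r (∑ i, c i))) :
    IsStackableConf G (extend f c 0) (f r) := by
  have htarget : (fun w => if w = f r then ∑ v, extend f c 0 v else 0)
      = extend f (Pi.single r (∑ i, c i)) 0 := by
    funext w
    by_cases hw : ∃ i, f i = w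
    · obtain ⟨i, rfl⟩ := hw
      simp [hf.extend_apply, hf.eq_iff, Pi.single_apply, sum_extend_zero hf]
    · have hr : w ≠ f r := fun h => hw ⟨r, h.symm⟩
      rw [extend_apply' _ _ _ hw, if_neg hr, Pi.zero_apply]
  rw [IsStackableConf, htarget]
  exact reflTransGen_cupMove_of_runPlan G hf hD h

end Plan

lemma extend_one_eq_ite {ι V : Type*} (f : ι → V) [∀ w, Decidable (∃ i, f i = w)] :
    extend f (1 : ι → ℕ) 0 = fun w => if ∃ i, f i = w then 1 else 0 := by
  funext w
  rw [extend_def]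
  split_ifs <;> rfl

section LevelCube

variable {d k : ℕ} {S K : Finset (Fin d)}

lemma exists_embedding_map_univ_eq (hdisj : Disjoint S K) (hK : #K = k) :
    ∃ e : Fin k ↪ Fin d, univ.map e = K ∧ ∀ i, e i ∉ S :=
  ⟨(K.orderEmbOfFin hK).toEmbedding, map_orderEmbOfFin_univ K hK,
    fun i hi => disjoint_left.mp hdisj hi (orderEmbOfFin_mem K hK i)⟩

lemma cubeGraph_dist_union_map {e : Fin k ↪ Fin d} (hS : ∀ i, e i ∉ S) (T T' : Finset (Fin k)) :
    (cubeGraph d).dist (S ∪ T.map e) (S ∪ T'.map e) = #(T ∆ T') := by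
  rw [cubeGraph_dist, union_map_symmDiff hS, card_map]

lemma cubeGraph_dist_empty_union_map {e : Fin k ↪ Fin d} (hS : ∀ i, e i ∉ S)
    (T : Finset (Fin k)) :
    (cubeGraph d).dist ∅ (S ∪ T.map e) = #S + #T := by
  rw [cubeGraph_dist_empty_left, card_union_map hS]

theorem isStackableConf_levelZeroCube_of_runPlan (hS : S = ∅) (hK : #K = k)
    {plan : List (Finset (Fin k) × Finset (Fin k))}
    (hplan : runPlan (fun T T' => #(T ∆ T')) plan 1 = some (Pi.single ∅ (2 ^ k))) :
    IsStackableConf (cubeGraph d) (fun X => if (S ⊆ X ∧ X ⊆ S ∪ K) ∨ X = ∅ then 1 else 0) ∅ := by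
  obtain ⟨e, heK, hSe⟩ := exists_embedding_map_univ_eq (hS ▸ disjoint_empty_left K) hK
  have hrange : ∀ X, (∃ T : Finset (Fin k), S ∪ T.map e = X) ↔ (S ⊆ X ∧ X ⊆ S ∪ K) ∨ X = ∅ := by
    intro X
    rw [exists_union_map_eq_iff, heK, iff_self_or]
    rintro rfl
    simp [hS]
  have hroot : S ∪ (∅ : Finset (Fin k)).map e = ∅ := by simp [hS]
  have hsum : ∑ _ : Finset (Fin k), 1 = 2 ^ k := by simp
  have := isStackableConf_extend_of_runPlan (cubeGraph d) (union_map_injective hSe)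
    (cubeGraph_dist_union_map hSe) (c := 1) (r := ∅) (by simpa [hsum] using hplan)
  simp only [extend_one_eq_ite, hrange, hroot] at this
  exact this

/-- Distances in `Q^d` between the vertex `∅`, encoded as `none`, and the vertices `S ∪ T` of a
level-`l` cube, encoded as `some T`. -/
def levelDist (l : ℕ) : Option (Finset (Fin k)) → Option (Finset (Fin k)) → ℕ
  | some T, some T' => #(T ∆ T')
  | some T, none | none, some T => l + #T
  | none, none => 0

theorem isStackableConf_levelCube_of_runPlan {l : ℕ} (hl : l ≠ 0) (hdisj : Disjoint S K)
    (hS : #S = l) (hK : #K = k) {plan : List (Option (Finset (Fin k)) × Option (Finset (Fin k)))}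
    (hplan : runPlan (levelDist l) plan 1 = some (Pi.single none (2 ^ k + 1))) :
    IsStackableConf (cubeGraph d) (fun X => if (S ⊆ X ∧ X ⊆ S ∪ K) ∨ X = ∅ then 1 else 0) ∅ := by
  obtain ⟨e, heK, hSe⟩ := exists_embedding_map_univ_eq hdisj hK
  let f : Option (Finset (Fin k)) → Finset (Fin d) := fun o => o.elim ∅ fun T => S ∪ T.map e
  have hvertex : ∀ T : Finset (Fin k), S ∪ T.map e ≠ ∅ := fun T h => by
    simp [union_eq_empty.mp h |>.1] at hS
    omega
  have hf : Injective f := by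
    rintro (_ | T) (_ | T') h
    · rfl
    · exact absurd h.symm (hvertex T')
    · exact absurd h (hvertex T)
    · exact congrArg some (union_map_injective hSe h)
  have hD : ∀ i j, (cubeGraph d).dist (f i) (f j) = levelDist l i j := by
    rintro (_ | T) (_ | T')
    · exact SimpleGraph.dist_self
    · exact (cubeGraph_dist_empty_union_map hSe T').trans (by rw [hS]; rfl)
    · rw [SimpleGraph.dist_comm]
      exact (cubeGraph_dist_empty_union_map hSe T).trans (by rw [hS]; rfl)
    · exact cubeGraph_dist_union_map hSe T T'
  have hrange : ∀ X, (∃ o, f o = X) ↔ (S ⊆ X ∧ X ⊆ S ∪ K) ∨ X = ∅ := by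
    intro X
    rw [Option.exists, ← heK, ← exists_union_map_eq_iff, eq_comm, or_comm]
    rfl
  have hsum : ∑ _ : Option (Finset (Fin k)), 1 = 2 ^ k + 1 := by simp
  have := isStackableConf_extend_of_runPlan (cubeGraph d) hf hD (c := 1) (r := none)
    (by simpa [hsum] using hplan)
  simp only [extend_one_eq_ite, hrange] at this
  exact this

end LevelCube

def levelZeroPlan : List (Finset (Fin 4) × Finset (Fin 4)) :=
  [({0,1,2,3}, {0,1,2}), ({0,1,2}, {0,1,3}), ({0,1,3}, ∅),
   ({0,2,3}, {0,2}), ({1,2,3}, {1,2}),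
   ({0}, {0,1}), ({3}, {0,3}), ({1}, {1,3}), ({2}, {2,3}),
   ({0,2}, ∅), ({1,2}, ∅), ({0,1}, ∅), ({0,3}, ∅), ({1,3}, ∅), ({2,3}, ∅)]

def levelOnePlan : List (Option (Finset (Fin 4)) × Option (Finset (Fin 4))) :=
  [(some {0,1}, some {0}), (some {1,2}, some {1}), (some {2,3}, some {2}), (some {0,3}, some {3}),
   (some {0,1,2}, some {0,2}), (some {0,2,3}, some {0,2}),
   (some {1,3}, some {1,2,3}), (some {1,2,3}, some {0,1,3}), (some {0,1,2,3}, some {0,1,3}),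
   (some ∅, none), (some {0}, none), (some {1}, none), (some {2}, none), (some {3}, none),
   (some {0,2}, none), (some {0,1,3}, none)]

def levelTwoPlan : List (Option (Finset (Fin 4)) × Option (Finset (Fin 4))) :=
  [(some {0}, some ∅), (some ∅, none),
   (some {0,1}, some {1}), (some {1,2}, some {1}), (some {1}, none),
   (some {0,2}, some {2}), (some {2,3}, some {2}), (some {2}, none),
   (some {3}, some {0,3}), (some {0,1,3}, some {0,3}), (some {0,2,3}, some {0,3}),
   (some {0,3}, none),
   (some {0,1,2,3}, some {1,2,3}), (some {1,2,3}, some {0,1,2}), (some {0,1,2}, some {1,3}),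
   (some {1,3}, none)]

def levelThreePlan : List (Option (Finset (Fin 4)) × Option (Finset (Fin 4))) :=
  [(some {0}, some ∅), (some {1}, some ∅), (some ∅, none),
   (some {0,3}, some {3}), (some {1,3}, some {3}), (some {2,3}, some {3}), (some {3}, none),
   (some {1,2}, some {2}), (some {0,2}, some {0,2,3}), (some {0,2,3}, some {2}), (some {2}, none),
   (some {0,1,2}, some {0,1}), (some {0,1,3}, some {0,1}), (some {1,2,3}, some {0,1,2,3}),
   (some {0,1,2,3}, some {0,1}), (some {0,1}, none)]

theorem levelFourCube_stackable_general (l d : ℕ) (hl : l ≤ 3)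
    (S K : Finset (Fin d)) (hdisj : Disjoint S K) (hS : S.card = l) (hK : K.card = 4) :
    IsStackableConf (cubeGraph d)
      (fun X => if (S ⊆ X ∧ X ⊆ S ∪ K) ∨ X = ∅ then 1 else 0) ∅ := by
  interval_cases l
  · exact isStackableConf_levelZeroCube_of_runPlan (card_eq_zero.mp hS) hK
      (plan := levelZeroPlan) (by decide)
  · exact isStackableConf_levelCube_of_runPlan one_ne_zero hdisj hS hK
      (plan := levelOnePlan) (by decide)
  · exact isStackableConf_levelCube_of_runPlan two_ne_zero hdisj hS hK
      (plan := levelTwoPlan) (by decide)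
  · exact isStackableConf_levelCube_of_runPlan three_ne_zero hdisj hS hK
      (plan := levelThreePlan) (by decide)

theorem levelFourCube_stackable (l d : ℕ) (hl : l ≤ 3) (hd : l + 4 ≤ d)
    (S K : Finset (Fin d)) (hdisj : Disjoint S K) (hS : S.card = l) (hK : K.card = 4) :
    IsStackableConf (cubeGraph d)
      (fun X => if (S ⊆ X ∧ X ⊆ S ∪ K) ∨ X = ∅ then 1 else 0) ∅ :=
  levelFourCube_stackable_general l d hl S K hdisj hS hK
end
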